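/- Let V be a Jordan algebra over K. For all x, y, u, v ∈ V one has the operator identities [D_{x,y}, D_{u,v}] = D_{{x,y,u}, v} − D_{u, {v,x,y}} and [D_{x,y}, D_{u,v}] = D_{x, {y,u,v}} − D_{{u,v,x}, y} in End_K(V). -/

import Mathlib

variable {K V : Type*} [Field K] [AddCommGroup V] [Module K V]

/-- The Jordan triple product `{x,y,z} = 2((xy)z + x(yz) - y(xz))`. -/
def triple (m : V →ₗ[K] V →ₗ[K] V) (x y z : V) : V :=
  2 • (m (m x y) z + m x (m y z) - m y (m x z))

/-- The operator `D_{x,y} = 2 L_{xy} + 2[L_x, L_y]`, satisfying `D_{x,y} z = {x,y,z}`. -/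
def Dop (m : V →ₗ[K] V →ₗ[K] V) (x y : V) : Module.End K V :=
  2 • (m (m x y) : Module.End K V) + 2 • ⁅(m x : Module.End K V), (m y : Module.End K V)⁆

/-- A derivation of the (Jordan) algebra `(V, m)`. -/
def IsDeriv (m : V →ₗ[K] V →ₗ[K] V) (D : Module.End K V) : Prop :=
  ∀ x y, D (m x y) = m (D x) y + m x (D y)

/-- A pair derivation `(D⁺, D⁻)` of the Jordan algebra `(V, m)`. -/
def IsPairDer (m : V →ₗ[K] V →ₗ[K] V) (Dp Dm : Module.End K V) : Prop :=
  ∀ x y z,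
    Dp (triple m x y z)
      = triple m (Dp x) y z + triple m x (Dm y) z + triple m x y (Dp z) ∧
    Dm (triple m x y z)
      = triple m (Dm x) y z + triple m x (Dp y) z + triple m x y (Dm z)

/-!
Write `D_{x,y} = 2 L_{xy} + 2 δ` with `δ = [L_x, L_y]`. The linearised Jordan identity says that
`δ` is a derivation of the product, hence of the triple product, so
`[δ, D_{u,v}] = D_{δu,v} + D_{u,δv}`; it also gives `[L_a, D_{u,v}] = D_{au,v} - D_{u,av}`.
Adding the two, and using `D_{x,y} u = {x,y,u}` and `D_{y,x} = 2 L_{xy} - 2 δ`, yields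
`[D_{x,y}, D_{u,v}] = D_{{x,y,u},v} - D_{u,{y,x,v}}`, where `{y,x,v} = {v,x,y}`.
The second identity is the first one for the pairs `(u,v)`, `(x,y)`, by antisymmetry.
-/

variable {m : V →ₗ[K] V →ₗ[K] V}

theorem Dop_apply (x y z : V) : Dop m x y z = triple m x y z := by
  simp only [Dop, triple, Ring.lie_def, LinearMap.add_apply, LinearMap.smul_apply,
    LinearMap.sub_apply, Module.End.mul_apply, smul_sub, smul_add]
  abel

theorem IsDeriv.map_triple {D : Module.End K V} (hD : IsDeriv m D) (x y z : V) :
    D (triple m x y z) = triple m (D x) y z + triple m x (D y) z + triple m x y (D z) := by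
  simp only [triple, map_nsmul, map_add, map_sub, hD _ _, LinearMap.add_apply]
  module

theorem IsDeriv.lie_Dop {D : Module.End K V} (hD : IsDeriv m D) (x y : V) :
    ⁅D, Dop m x y⁆ = Dop m (D x) y + Dop m x (D y) := by
  ext z
  simp only [Ring.lie_def, LinearMap.sub_apply, Module.End.mul_apply, LinearMap.add_apply,
    Dop_apply, hD.map_triple]
  abel

structure IsJordanProduct (m : V →ₗ[K] V →ₗ[K] V) : Prop where
  comm : ∀ x y, m x y = m y x
  jordan : ∀ x y z : V,
    ⁅(m x : Module.End K V), m (m y z)⁆ + ⁅(m y : Module.End K V), m (m z x)⁆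
      + ⁅(m z : Module.End K V), m (m x y)⁆ = 0

namespace IsJordanProduct

theorem jordan_apply (hm : IsJordanProduct m) (x y z w : V) :
    m x (m (m y z) w) - m (m y z) (m x w) + (m y (m (m z x) w) - m (m z x) (m y w))
      + (m z (m (m x y) w) - m (m x y) (m z w)) = 0 := by
  simpa [Ring.lie_def] using LinearMap.congr_fun (hm.jordan x y z) w

/- In the next two proofs, `simp only [hm.comm]` is ordered rewriting by a permutation lemma:
it puts every product into one canonical order, after which commutativity is no longer needed. -/

theorem isDeriv_lie_lmul (hm : IsJordanProduct m) (x y : V) : IsDeriv m ⁅m x, m y⁆ := by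
  intro u v
  have h₁ := hm.jordan_apply x u v y
  have h₂ := hm.jordan_apply y u v x
  simp only [Ring.lie_def, Module.End.mul_apply, LinearMap.sub_apply, map_sub]
  simp only [hm.comm] at h₁ h₂ ⊢
  linear_combination (norm := module) h₁ - h₂

theorem lie_lmul_Dop (hm : IsJordanProduct m) (a u v : V) :
    ⁅m a, Dop m u v⁆ = Dop m (m a u) v - Dop m u (m a v) := by
  ext w
  have h₁ := hm.jordan_apply a u v w
  have h₂ := hm.jordan_apply a u w v
  have h₃ := hm.jordan_apply a v w u
  simp only [Ring.lie_def, LinearMap.sub_apply, Module.End.mul_apply, Dop_apply, triple,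
    map_nsmul, map_add, map_sub]
  simp only [hm.comm] at h₁ h₂ h₃ ⊢
  linear_combination (norm := module) (2 : ℤ) • (h₁ - h₂ + h₃)

theorem triple_comm (hm : IsJordanProduct m) (x y z : V) : triple m x y z = triple m z y x := by
  simp only [triple, hm.comm]
  abel

section

-- The commutator Lie ring structure of an associative ring is not a global instance.
attribute [local instance] LieRing.ofAssociativeRing

theorem Dop_swap (hm : IsJordanProduct m) (x y : V) :
    Dop m y x = 2 • (m (m x y) : Module.End K V) - 2 • ⁅(m x : Module.End K V), m y⁆ := by
  rw [Dop, hm.comm y x, ← lie_skew (m x : Module.End K V), smul_neg, sub_neg_eq_add]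

theorem lie_Dop_Dop_left (hm : IsJordanProduct m) (x y u v : V) :
    ⁅Dop m x y, Dop m u v⁆ = Dop m (triple m x y u) v - Dop m u (triple m v x y) :=
  calc ⁅Dop m x y, Dop m u v⁆
      = 2 • ⁅(m (m x y) : Module.End K V), Dop m u v⁆ + 2 • ⁅⁅m x, m y⁆, Dop m u v⁆ := by
        rw [Dop, add_lie, nsmul_lie, nsmul_lie]
    _ = 2 • (Dop m (m (m x y) u) v - Dop m u (m (m x y) v))
          + 2 • (Dop m (⁅m x, m y⁆ u) v + Dop m u (⁅m x, m y⁆ v)) := by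
        rw [hm.lie_lmul_Dop, (hm.isDeriv_lie_lmul x y).lie_Dop]
    _ = Dop m (Dop m x y u) v - Dop m u (Dop m y x v) := by
        rw [hm.Dop_swap x y]
        simp only [Dop, LinearMap.add_apply, LinearMap.sub_apply, LinearMap.smul_apply, map_add,
          map_sub, map_nsmul, lie_sub, lie_nsmul, add_lie, nsmul_lie]
        module
    _ = Dop m (triple m x y u) v - Dop m u (triple m v x y) := by
        rw [Dop_apply, Dop_apply, hm.triple_comm v]

theorem lie_Dop_Dop_right (hm : IsJordanProduct m) (x y u v : V) :
    ⁅Dop m x y, Dop m u v⁆ = Dop m x (triple m y u v) - Dop m (triple m u v x) y := by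
  rw [← lie_skew, hm.lie_Dop_Dop_left u v x y, neg_sub]

end

end IsJordanProduct

theorem stmt15_general
    (m : V →ₗ[K] V →ₗ[K] V)
    (hcomm : ∀ x y : V, m x y = m y x)
    (hJordan : ∀ x y z : V,
      ⁅(m x : Module.End K V), m (m y z)⁆ + ⁅(m y : Module.End K V), m (m z x)⁆
        + ⁅(m z : Module.End K V), m (m x y)⁆ = 0) :
    ∀ x y u v : V,
      ⁅Dop m x y, Dop m u v⁆ = Dop m (triple m x y u) v - Dop m u (triple m v x y) ∧
      ⁅Dop m x y, Dop m u v⁆ = Dop m x (triple m y u v) - Dop m (triple m u v x) y := by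
  have hm : IsJordanProduct m := ⟨hcomm, hJordan⟩
  exact fun x y u v => ⟨hm.lie_Dop_Dop_left x y u v, hm.lie_Dop_Dop_right x y u v⟩

/-- The 5-linear identities
`[D_{x,y}, D_{u,v}] = D_{{x,y,u},v} - D_{u,{v,x,y}} = D_{x,{y,u,v}} - D_{{u,v,x},y}`. -/
theorem stmt15
    (h2 : (2 : K) ≠ 0) (h3 : (3 : K) ≠ 0)
    (m : V →ₗ[K] V →ₗ[K] V)
    (hcomm : ∀ x y : V, m x y = m y x)
    (hJordan : ∀ x y z : V,
      ⁅(m x : Module.End K V), m (m y z)⁆ + ⁅(m y : Module.End K V), m (m z x)⁆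
        + ⁅(m z : Module.End K V), m (m x y)⁆ = 0) :
    ∀ x y u v : V,
      ⁅Dop m x y, Dop m u v⁆ = Dop m (triple m x y u) v - Dop m u (triple m v x y) ∧
      ⁅Dop m x y, Dop m u v⁆ = Dop m x (triple m y u v) - Dop m (triple m u v x) y :=
  stmt15_general m hcomm hJordan
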